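/- Let T have density f(u) = φ(u)·1_{u>0} + φ(u)·(1 − Φ(u)). Then the Kolmogorov distance sup_{x ∈ ℝ} |P[T ≤ x] − Φ(x)| equals exactly 1/8, and this value is independent of n (the density f does not depend on n). -/

import Mathlib

open MeasureTheory Set Filter Topology

noncomputable def stdPhi (x : ℝ) : ℝ := (Real.sqrt (2 * Real.pi))⁻¹ * Real.exp (-x ^ 2 / 2)

noncomputable def stdPhiCdf (x : ℝ) : ℝ := ∫ t in Set.Iio x, stdPhi t

lemma stdPhi_nonneg (x : ℝ) : 0 ≤ stdPhi x := by
  unfold stdPhi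
  positivity

lemma continuous_stdPhi : Continuous stdPhi := by
  unfold stdPhi
  fun_prop

lemma integrable_stdPhi : Integrable stdPhi := by
  have h : Integrable (fun x : ℝ => Real.exp (-(1/2 : ℝ) * x ^ 2)) :=
    integrable_exp_neg_mul_sq (by norm_num)
  have h2 := h.const_mul (Real.sqrt (2 * Real.pi))⁻¹
  refine h2.congr (Filter.Eventually.of_forall fun x => ?_)
  unfold stdPhi
  ring_nf

lemma integral_stdPhi : ∫ x, stdPhi x = 1 := by
  have h : ∫ x : ℝ, Real.exp (-(1/2 : ℝ) * x ^ 2) = Real.sqrt (Real.pi / (1/2)) :=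
    integral_gaussian (1/2)
  have heq : ∀ x : ℝ, stdPhi x = (Real.sqrt (2 * Real.pi))⁻¹ * Real.exp (-(1/2 : ℝ) * x ^ 2) := by
    intro x; unfold stdPhi; ring_nf
  rw [funext heq, integral_const_mul, h]
  have : Real.pi / (1/2) = 2 * Real.pi := by ring
  rw [this]
  rw [inv_mul_cancel₀]
  positivity

lemma stdPhiCdf_nonneg (x : ℝ) : 0 ≤ stdPhiCdf x :=
  setIntegral_nonneg measurableSet_Iio fun u _ => stdPhi_nonneg u

lemma stdPhiCdf_le_one (x : ℝ) : stdPhiCdf x ≤ 1 := by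
  have := setIntegral_le_integral (μ := volume) (s := Set.Iio x) integrable_stdPhi
    (Filter.Eventually.of_forall stdPhi_nonneg)
  simpa [stdPhiCdf, integral_stdPhi] using this

lemma stdPhiCdf_mono : Monotone stdPhiCdf := fun a b h =>
  setIntegral_mono_set integrable_stdPhi.integrableOn
    (Filter.Eventually.of_forall stdPhi_nonneg) (Filter.Eventually.of_forall (Iio_subset_Iio h))

lemma stdPhiCdf_eq_Iic (x : ℝ) : stdPhiCdf x = ∫ t in Set.Iic x, stdPhi t :=
  setIntegral_congr_set Iio_ae_eq_Iic

lemma stdPhiCdf_zero : stdPhiCdf 0 = 1/2 := by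
  have hsym : (∫ x in Set.Ioi (0:ℝ), stdPhi x) = ∫ x in Set.Iic (-(0:ℝ)), stdPhi x := by
    rw [← integral_comp_neg_Ioi]
    refine setIntegral_congr_fun measurableSet_Ioi fun u _ => ?_
    unfold stdPhi; ring_nf
  have hsplit : (∫ x in Set.Iic (0:ℝ), stdPhi x) + ∫ x in Set.Ioi (0:ℝ), stdPhi x = 1 := by
    rw [intervalIntegral.integral_Iic_add_Ioi integrable_stdPhi.integrableOn integrable_stdPhi.integrableOn,
      integral_stdPhi]
  rw [stdPhiCdf_eq_Iic]
  rw [neg_zero] at hsym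
  linarith [hsplit, hsym]

lemma stdPhiCdf_sub (a x : ℝ) : stdPhiCdf x - stdPhiCdf a = ∫ t in a..x, stdPhi t := by
  rw [stdPhiCdf_eq_Iic, stdPhiCdf_eq_Iic]
  have h := intervalIntegral.integral_Iic_sub_Iic (μ := volume) (f := stdPhi) (a := a) (b := x)
    integrable_stdPhi.integrableOn integrable_stdPhi.integrableOn
  linarith

lemma hasDerivAt_stdPhiCdf (x : ℝ) : HasDerivAt stdPhiCdf (stdPhi x) x := by
  have h : HasDerivAt (fun u => stdPhiCdf 0 + ∫ t in (0:ℝ)..u, stdPhi t) (stdPhi x) x := by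
    refine HasDerivAt.const_add _ ?_
    exact intervalIntegral.integral_hasDerivAt_right
      integrable_stdPhi.intervalIntegrable
      (continuous_stdPhi.stronglyMeasurableAtFilter _ _)
      continuous_stdPhi.continuousAt
  refine h.congr_of_eventuallyEq (Filter.Eventually.of_forall fun u => ?_)
  show stdPhiCdf u = stdPhiCdf 0 + ∫ t in (0:ℝ)..u, stdPhi t
  rw [← stdPhiCdf_sub 0 u]; ring

lemma tendsto_stdPhiCdf_atBot : Tendsto stdPhiCdf atBot (𝓝 0) := by
  have h0 : (0:ℝ) = ∫ u : ℝ, (0:ℝ) := by simp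
  rw [h0]
  have := MeasureTheory.tendsto_integral_filter_of_dominated_convergence
    (μ := volume) (l := atBot) (F := fun (x : ℝ) (u : ℝ) => Set.indicator (Set.Iio x) stdPhi u)
    (f := fun _ => (0:ℝ)) (bound := stdPhi)
    (Filter.Eventually.of_forall fun x =>
      (continuous_stdPhi.aestronglyMeasurable).indicator measurableSet_Iio)
    (Filter.Eventually.of_forall fun x => Filter.Eventually.of_forall fun u => by
      by_cases h : u ∈ Set.Iio x <;>
        simp [Set.indicator_of_mem, Set.indicator_of_notMem, h, abs_of_nonneg (stdPhi_nonneg u),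
          stdPhi_nonneg u])
    integrable_stdPhi
    (Filter.Eventually.of_forall fun u => by
      refine Tendsto.congr' ?_ tendsto_const_nhds
      filter_upwards [eventually_le_atBot u] with x hx
      rw [Set.indicator_of_notMem]
      simp [hx, not_lt.mpr hx])
  refine Tendsto.congr (fun x => ?_) this
  rw [integral_indicator measurableSet_Iio]
  rfl

lemma continuous_stdPhiCdf : Continuous stdPhiCdf :=
  continuous_iff_continuousAt.2 fun x => (hasDerivAt_stdPhiCdf x).continuousAt

lemma integrableOn_phi_mul_cdf (s : Set ℝ) : IntegrableOn (fun u => stdPhi u * stdPhiCdf u) s := by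
  refine Integrable.mono (integrable_stdPhi.integrableOn (s := s))
    ((continuous_stdPhi.mul continuous_stdPhiCdf).aestronglyMeasurable.restrict)
    (Filter.Eventually.of_forall fun u => ?_)
  rw [Real.norm_eq_abs, Real.norm_eq_abs, abs_mul]
  have h1 : |stdPhiCdf u| ≤ 1 := by
    rw [abs_le]; constructor <;> [linarith [stdPhiCdf_nonneg u]; exact stdPhiCdf_le_one u]
  calc |stdPhi u| * |stdPhiCdf u| ≤ |stdPhi u| * 1 :=
        mul_le_mul_of_nonneg_left h1 (abs_nonneg _)
    _ = |stdPhi u| := mul_one _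

lemma tendsto_sq_atBot : Tendsto (fun x => stdPhiCdf x ^ 2 / 2) atBot (𝓝 0) := by
  have h := (tendsto_stdPhiCdf_atBot.pow 2).div_const 2
  simpa using h

lemma integral_phi_mul_cdf (x : ℝ) :
    ∫ u in Set.Iio x, stdPhi u * stdPhiCdf u = stdPhiCdf x ^ 2 / 2 := by
  rw [setIntegral_congr_set Iio_ae_eq_Iic]
  have hderiv : ∀ u ∈ Set.Iic x,
      HasDerivAt (fun y => stdPhiCdf y ^ 2 / 2) (stdPhi u * stdPhiCdf u) u := by
    intro u _
    have h : HasDerivAt (fun y => stdPhiCdf y ^ 2 / 2) _ u := ((hasDerivAt_stdPhiCdf u).pow 2).div_const 2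
    convert h using 1
    ring
  rw [integral_Iic_of_hasDerivAt_of_tendsto' hderiv (integrableOn_phi_mul_cdf _) tendsto_sq_atBot]
  ring

lemma integral_indicator_part (x : ℝ) :
    (∫ u in Set.Iio x, stdPhi u * (if 0 < u then (1:ℝ) else 0)) =
      if 0 ≤ x then stdPhiCdf x - 1/2 else 0 := by
  have heq : (fun u => stdPhi u * (if 0 < u then (1:ℝ) else 0)) =
      Set.indicator (Set.Ioi 0) stdPhi := by
    funext u
    by_cases h : 0 < u <;> simp [Set.indicator, h, Set.mem_Ioi]
  rw [heq, setIntegral_indicator measurableSet_Ioi]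
  by_cases hx : 0 ≤ x
  · rw [if_pos hx]
    have hset : Set.Iio x ∩ Set.Ioi 0 = Set.Ioo 0 x := by
      ext u; simp [Set.mem_Ioo, and_comm]
    rw [hset, setIntegral_congr_set Ioo_ae_eq_Ioc, ← intervalIntegral.integral_of_le hx,
      ← stdPhiCdf_sub 0 x, stdPhiCdf_zero]
  · rw [if_neg hx]
    have hset : Set.Iio x ∩ Set.Ioi 0 = (∅ : Set ℝ) := by
      ext u
      simp only [Set.mem_inter_iff, Set.mem_Iio, Set.mem_Ioi, Set.mem_empty_iff_false, iff_false]
      rintro ⟨h1, h2⟩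
      exact hx (le_of_lt (h2.trans h1))
    rw [hset, setIntegral_empty]

lemma key_formula (x : ℝ) :
    (∫ u in Set.Iio x, stdPhi u * (if 0 < u then (1 : ℝ) else 0) +
        stdPhi u * (1 - stdPhiCdf u)) - stdPhiCdf x =
      (if 0 ≤ x then stdPhiCdf x - 1/2 else 0) - stdPhiCdf x ^ 2 / 2 := by
  have h1 : IntegrableOn (fun u => stdPhi u * (if 0 < u then (1:ℝ) else 0)) (Set.Iio x) := by
    have heq : (fun u => stdPhi u * (if 0 < u then (1:ℝ) else 0)) =
        Set.indicator (Set.Ioi 0) stdPhi := by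
      funext u; by_cases h : 0 < u <;> simp [Set.indicator, h, Set.mem_Ioi]
    rw [heq]
    exact (integrable_stdPhi.indicator measurableSet_Ioi).integrableOn
  have h2 : IntegrableOn (fun u => stdPhi u * (1 - stdPhiCdf u)) (Set.Iio x) := by
    have heq : (fun u => stdPhi u * (1 - stdPhiCdf u)) =
        fun u => stdPhi u - stdPhi u * stdPhiCdf u := by funext u; ring
    rw [heq]
    exact integrable_stdPhi.integrableOn.sub (integrableOn_phi_mul_cdf _)
  rw [integral_add h1 h2, integral_indicator_part]
  have heq : (fun u => stdPhi u * (1 - stdPhiCdf u)) =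
      fun u => stdPhi u - stdPhi u * stdPhiCdf u := by funext u; ring
  rw [heq, integral_sub integrable_stdPhi.integrableOn (integrableOn_phi_mul_cdf _),
    integral_phi_mul_cdf]
  have : (∫ u in Set.Iio x, stdPhi u) = stdPhiCdf x := rfl
  rw [this]
  ring

lemma abs_bound (x : ℝ) :
    |(if 0 ≤ x then stdPhiCdf x - 1/2 else 0) - stdPhiCdf x ^ 2 / 2| ≤ 1/8 := by
  have h0 := stdPhiCdf_nonneg x
  have h1 := stdPhiCdf_le_one x
  by_cases hx : 0 ≤ x
  · rw [if_pos hx]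
    have hge : (1:ℝ)/2 ≤ stdPhiCdf x := by
      rw [← stdPhiCdf_zero]; exact stdPhiCdf_mono hx
    rw [abs_le]; constructor <;> nlinarith
  · rw [if_neg hx]
    have hle : stdPhiCdf x ≤ 1/2 := by
      rw [← stdPhiCdf_zero]; exact stdPhiCdf_mono (le_of_not_ge hx)
    rw [abs_le]; constructor <;> nlinarith

theorem kolmogorov_distance_eq_eighth :
    (⨆ x : ℝ,
        |(∫ u in Set.Iio x, stdPhi u * (if 0 < u then (1 : ℝ) else 0) +
            stdPhi u * (1 - stdPhiCdf u)) - stdPhiCdf x|) = 1 / 8 := by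
  have hval : ∀ x : ℝ,
      |(∫ u in Set.Iio x, stdPhi u * (if 0 < u then (1 : ℝ) else 0) +
          stdPhi u * (1 - stdPhiCdf u)) - stdPhiCdf x| =
        |(if 0 ≤ x then stdPhiCdf x - 1/2 else 0) - stdPhiCdf x ^ 2 / 2| := by
    intro x; rw [key_formula x]
  have hbound : ∀ x : ℝ,
      |(∫ u in Set.Iio x, stdPhi u * (if 0 < u then (1 : ℝ) else 0) +
          stdPhi u * (1 - stdPhiCdf u)) - stdPhiCdf x| ≤ 1/8 := fun x => by
    rw [hval x]; exact abs_bound x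
  apply le_antisymm
  · exact ciSup_le hbound
  · have hb : BddAbove (Set.range fun x : ℝ =>
        |(∫ u in Set.Iio x, stdPhi u * (if 0 < u then (1 : ℝ) else 0) +
            stdPhi u * (1 - stdPhiCdf u)) - stdPhiCdf x|) := by
      refine ⟨1/8, ?_⟩
      rintro _ ⟨x, rfl⟩
      exact hbound x
    have h0 : |(∫ u in Set.Iio (0:ℝ), stdPhi u * (if 0 < u then (1 : ℝ) else 0) +
        stdPhi u * (1 - stdPhiCdf u)) - stdPhiCdf 0| = 1/8 := by
      rw [hval 0, if_pos le_rfl, stdPhiCdf_zero]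
      norm_num
    calc (1:ℝ)/8 = _ := h0.symm
      _ ≤ _ := le_ciSup hb 0
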